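/- arXiv:2209.02315 — 2 statements merged into one kernel-verified Lean document; each statement's English description precedes it below -/
import Mathlib

section
/- Let C = {x ∈ ℝⁿ : 𝟏ᵀx = 1, x ≥ 0} be the standard simplex, K ∈ {1, …, n−1}, γ > 0, and let f be continuously differentiable on an open set O with C ⊆ O. Let x* be a d-stationary point of the problem of minimizing f(x) + γ T_{K,n,1}(x) over C, i.e., f′(x*; d) + γ T_{K,n,1}′(x*; d) ≥ 0 for all d ∈ F(x*; C). If γ > √2·M′, where M′ is a Lipschitz constant of f on C with respect to the ℓ₂ norm, then T_{K,n,1}(x*) = 0, i.e., ‖x*‖₀ ≤ K. If, in addition, f is M-smooth and 0 ∈ O, then the weaker condition γ > min{√2·M′, √2·(‖∇f(0)‖₂ + M)} already implies T_{K,n,1}(x*) = 0. -/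
open Filter Topology

/-- The feasible cone of `C` at `x`. -/
def feasCone {E : Type*} [AddCommMonoid E] [SMul ℝ E] (C : Set E) (x : E) : Set E :=
  {d | x ∈ C ∧ ∃ ς' > (0 : ℝ), ∀ ς : ℝ, 0 < ς → ς < ς' → x + ς • d ∈ C}

/-- `f` has one-sided directional derivative `L` at `x` in direction `d`. -/
def HasDDerivAt {E : Type*} [AddCommMonoid E] [SMul ℝ E] (f : E → ℝ) (x d : E) (L : ℝ) :
    Prop :=
  Tendsto (fun ς : ℝ => (f (x + ς • d) - f x) / ς) (nhdsWithin 0 (Set.Ioi 0)) (nhds L)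

/-- The trimmed ℓ₁ norm `T_{K,n,1}`: the sum of the `n − K` smallest absolute entries. -/
noncomputable def trimmed1 {n : ℕ} (K : ℕ) (v : Fin n → ℝ) : ℝ :=
  sInf {s : ℝ | ∃ Λ : Finset (Fin n), Λ.card = n - K ∧ s = ∑ i ∈ Λ, |v i|}

/-- ℓ₂ norm of a vector. -/
noncomputable def l2 {k : ℕ} (v : Fin k → ℝ) : ℝ := Real.sqrt (∑ j, v j ^ 2)

/-- The number of nonzero entries `‖v‖₀`. -/
noncomputable def l0 {k : ℕ} (v : Fin k → ℝ) : ℕ :=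
  (Finset.univ.filter fun i => v i ≠ 0).card

/-- The standard simplex in ℝⁿ. -/
def simplex (n : ℕ) : Set (Fin n → ℝ) := {x | (∑ i, x i) = 1 ∧ ∀ i, 0 ≤ x i}

/-- The gradient of `f` at `x` (the vector of partial derivatives). -/
noncomputable def gradf {n : ℕ} (f : (Fin n → ℝ) → ℝ) (x : Fin n → ℝ) : Fin n → ℝ :=
  fun i => fderiv ℝ f x (fun j => if j = i then 1 else 0)

/-! ### Auxiliary lemmas -/

section Aux

lemma l2_eq_norm {k : ℕ} (v : Fin k → ℝ) :
    l2 v = ‖(WithLp.linearEquiv 2 ℝ (Fin k → ℝ)).symm v‖ := by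
  rw [EuclideanSpace.norm_eq]
  simp [l2, sq_abs]

lemma l2_nonneg {k : ℕ} (v : Fin k → ℝ) : 0 ≤ l2 v := Real.sqrt_nonneg _

lemma l2_triangle {k : ℕ} (a b : Fin k → ℝ) : l2 a ≤ l2 b + l2 (a - b) := by
  rw [l2_eq_norm, l2_eq_norm, l2_eq_norm, map_sub]
  exact norm_le_insert' _ _

lemma tset_finite {n K : ℕ} (v : Fin n → ℝ) :
    {s : ℝ | ∃ Λ : Finset (Fin n), Λ.card = n - K ∧ s = ∑ i ∈ Λ, |v i|}.Finite := by
  have h : {s : ℝ | ∃ Λ : Finset (Fin n), Λ.card = n - K ∧ s = ∑ i ∈ Λ, |v i|} ⊆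
      (fun Λ : Finset (Fin n) => ∑ i ∈ Λ, |v i|) '' Set.univ := by
    rintro s ⟨Λ, _, rfl⟩; exact ⟨Λ, trivial, rfl⟩
  exact (Set.finite_univ.image _).subset h

lemma tset_nonempty {n K : ℕ} (v : Fin n → ℝ) :
    {s : ℝ | ∃ Λ : Finset (Fin n), Λ.card = n - K ∧ s = ∑ i ∈ Λ, |v i|}.Nonempty := by
  obtain ⟨Λ, -, hcard⟩ := Finset.exists_subset_card_eq
    (s := (Finset.univ : Finset (Fin n))) (n := n - K) (by simpa using Nat.sub_le n K)
  exact ⟨_, Λ, hcard, rfl⟩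

lemma trimmed1_exists {n K : ℕ} (v : Fin n → ℝ) :
    ∃ Λ : Finset (Fin n), Λ.card = n - K ∧ trimmed1 K v = ∑ i ∈ Λ, |v i| := by
  obtain ⟨Λ, hc, he⟩ := (tset_nonempty (K := K) v).csInf_mem (tset_finite v)
  exact ⟨Λ, hc, he⟩

lemma trimmed1_le {n K : ℕ} (v : Fin n → ℝ) {Λ : Finset (Fin n)} (h : Λ.card = n - K) :
    trimmed1 K v ≤ ∑ i ∈ Λ, |v i| :=
  csInf_le (tset_finite v).bddBelow ⟨Λ, h, rfl⟩

lemma trimmed1_nonneg {n K : ℕ} (v : Fin n → ℝ) : 0 ≤ trimmed1 K v := by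
  apply le_csInf (tset_nonempty v)
  rintro s ⟨Λ, -, rfl⟩
  exact Finset.sum_nonneg fun i _ => abs_nonneg _

/-- The direction `e_j - e_i`. -/
noncomputable def dir {n : ℕ} (i j : Fin n) : Fin n → ℝ :=
  fun k => (if k = j then 1 else 0) - (if k = i then 1 else 0)

lemma sum_dir {n : ℕ} {i j : Fin n} : ∑ k, dir i j k = 0 := by
  simp [dir, Finset.sum_sub_distrib]

lemma sum_dir_sq {n : ℕ} {i j : Fin n} (hij : i ≠ j) : ∑ k, dir i j k ^ 2 = 2 := by
  have h : ∀ k ∈ Finset.univ, dir i j k ^ 2 =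
      (if k = j then (1:ℝ) else 0) + (if k = i then 1 else 0) := by
    intro k _
    by_cases hkj : k = j <;> by_cases hki : k = i <;> simp_all [dir]
  rw [Finset.sum_congr rfl h]
  simp [Finset.sum_add_distrib]
  norm_num

lemma sum_dir_over {n : ℕ} {i j : Fin n} (Λ : Finset (Fin n)) :
    ∑ k ∈ Λ, dir i j k = (if j ∈ Λ then 1 else 0) - (if i ∈ Λ then 1 else 0) := by
  simp [dir, Finset.sum_sub_distrib]

lemma dir_apply_nonneg {n : ℕ} {i j : Fin n} {x : Fin n → ℝ} {ς : ℝ}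
    (hij : i ≠ j) (hx : x ∈ simplex n) (h1 : 0 < ς) (h2 : ς ≤ x i)
    (k : Fin n) : 0 ≤ (x + ς • dir i j) k := by
  have hk := hx.2 k
  have hij' : (i = j) = False := by simp [hij]
  have hji' : (j = i) = False := by simp [Ne.symm hij]
  by_cases hki : k = i
  · subst hki
    simp only [dir, Pi.add_apply, Pi.smul_apply, smul_eq_mul, if_pos rfl, hij']
    norm_num
    linarith
  · by_cases hkj : k = j
    · subst hkj
      simp only [dir, Pi.add_apply, Pi.smul_apply, smul_eq_mul, if_pos rfl, hji']
      norm_num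
      linarith
    · simp [dir, hki, hkj, Pi.smul_apply, smul_eq_mul, hk]

lemma mem_simplex_dir {n : ℕ} {i j : Fin n} {x : Fin n → ℝ} {ς : ℝ}
    (hij : i ≠ j) (hx : x ∈ simplex n) (h1 : 0 < ς) (h2 : ς ≤ x i) :
    x + ς • dir i j ∈ simplex n := by
  refine ⟨?_, dir_apply_nonneg hij hx h1 h2⟩
  simp only [Pi.add_apply, Pi.smul_apply, smul_eq_mul, Finset.sum_add_distrib,
    ← Finset.mul_sum, sum_dir, hx.1]
  ring

lemma trimmed1_shift {n K : ℕ} {i j : Fin n} {x : Fin n → ℝ} {ς : ℝ}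
    (hij : i ≠ j) (hx : x ∈ simplex n) (h1 : 0 < ς) (h2 : ς ≤ x i)
    {Λ : Finset (Fin n)} (hcard : Λ.card = n - K)
    (hTeq : trimmed1 K x = ∑ k ∈ Λ, |x k|) (hiΛ : i ∈ Λ) (hjΛ : j ∉ Λ) :
    trimmed1 K (x + ς • dir i j) = trimmed1 K x - ς := by
  have habs : ∀ Λ' : Finset (Fin n), ∑ k ∈ Λ', |(x + ς • dir i j) k| =
      (∑ k ∈ Λ', |x k|) + ς * ((if j ∈ Λ' then 1 else 0) - (if i ∈ Λ' then 1 else 0)) := by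
    intro Λ'
    have h3 : ∀ k ∈ Λ', |(x + ς • dir i j) k| = |x k| + ς * dir i j k := by
      intro k _
      rw [abs_of_nonneg (dir_apply_nonneg hij hx h1 h2 k), abs_of_nonneg (hx.2 k)]
      simp [Pi.smul_apply, smul_eq_mul]
    rw [Finset.sum_congr rfl h3, Finset.sum_add_distrib, ← Finset.mul_sum, sum_dir_over]
  apply le_antisymm
  · have := trimmed1_le (x + ς • dir i j) hcard
    rw [habs Λ, if_neg hjΛ, if_pos hiΛ, ← hTeq] at this
    linarith
  · apply le_csInf (tset_nonempty _)
    rintro s ⟨Λ', hc', rfl⟩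
    rw [habs Λ']
    have hb : trimmed1 K x ≤ ∑ k ∈ Λ', |x k| := trimmed1_le x hc'
    by_cases hj' : j ∈ Λ' <;> by_cases hi' : i ∈ Λ' <;>
      simp only [hj', hi', if_pos, if_neg, if_true, if_false] <;> linarith

lemma f_dd {n : ℕ} {f : (Fin n → ℝ) → ℝ} {x d : Fin n → ℝ}
    (hdf : DifferentiableAt ℝ f x) :
    Tendsto (fun ς : ℝ => (f (x + ς • d) - f x) / ς) (nhdsWithin 0 (Set.Ioi 0))
      (nhds (fderiv ℝ f x d)) := by
  have h1 : HasDerivAt (fun ς : ℝ => x + ς • d) d 0 := by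
    simpa using ((hasDerivAt_id (0:ℝ)).smul_const d).const_add x
  have h2 : HasDerivAt (fun ς : ℝ => f (x + ς • d)) (fderiv ℝ f x d) 0 := by
    have hd : HasFDerivAt f (fderiv ℝ f x) (x + (0:ℝ) • d) := by
      simpa using hdf.hasFDerivAt
    exact hd.comp_hasDerivAt 0 h1
  have h3 := hasDerivAt_iff_tendsto_slope.mp h2
  have h4 : Tendsto (slope (fun ς : ℝ => f (x + ς • d)) 0) (nhdsWithin 0 (Set.Ioi 0))
      (nhds (fderiv ℝ f x d)) :=
    h3.mono_left (nhdsWithin_mono 0 (fun t ht => ne_of_gt ht))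
  refine h4.congr (fun ς => ?_)
  simp [slope_def_field]

lemma l2_smul_dir {n : ℕ} {i j : Fin n} (hij : i ≠ j) {ς : ℝ} (hς : 0 ≤ ς) :
    l2 (ς • dir i j) = ς * Real.sqrt 2 := by
  unfold l2
  have h : ∀ k, (ς • dir i j) k ^ 2 = ς ^ 2 * dir i j k ^ 2 := by
    intro k; simp [Pi.smul_apply, smul_eq_mul]; ring
  simp only [h, ← Finset.mul_sum, sum_dir_sq hij]
  rw [show ς ^ 2 * 2 = (ς * ς) * 2 by ring, ← Real.sqrt_mul_self hς]
  rw [Real.sqrt_mul (mul_nonneg (Real.sqrt_nonneg _) (Real.sqrt_nonneg _))]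
  rw [Real.sqrt_mul_self (Real.sqrt_nonneg _)]

lemma l2_simplex_le_one {n : ℕ} {x : Fin n → ℝ} (hx : x ∈ simplex n) : l2 x ≤ 1 := by
  have h1 : ∀ k, x k ^ 2 ≤ x k := by
    intro k
    have hk := hx.2 k
    have hk1 : x k ≤ 1 := by
      have := Finset.single_le_sum (f := x) (fun m _ => hx.2 m) (Finset.mem_univ k)
      rw [hx.1] at this; exact this
    nlinarith
  have h2 : ∑ k, x k ^ 2 ≤ 1 := by
    rw [← hx.1]; exact Finset.sum_le_sum fun k _ => h1 k
  calc l2 x ≤ Real.sqrt 1 := Real.sqrt_le_sqrt h2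
    _ = 1 := Real.sqrt_one

lemma bound_grad {n : ℕ} {f : (Fin n → ℝ) → ℝ} {x : Fin n → ℝ} {i j : Fin n} (hij : i ≠ j) :
    fderiv ℝ f x (dir i j) ≤ Real.sqrt 2 * l2 (gradf f x) := by
  have he : dir i j = (fun k => if k = j then (1:ℝ) else 0) - (fun k => if k = i then 1 else 0) := by
    funext k; simp [dir]
  rw [he, map_sub]
  show gradf f x j - gradf f x i ≤ _
  set a := gradf f x with ha
  have hs : a i ^ 2 + a j ^ 2 ≤ ∑ k, a k ^ 2 := by
    have := Finset.sum_le_sum_of_subset_of_nonneg (Finset.subset_univ ({i, j} : Finset (Fin n)))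
      (fun k _ _ => sq_nonneg (a k))
    rwa [Finset.sum_pair hij] at this
  have h1 : (a j - a i) ^ 2 ≤ 2 * ∑ k, a k ^ 2 := by nlinarith [sq_nonneg (a i + a j)]
  calc a j - a i ≤ |a j - a i| := le_abs_self _
    _ = Real.sqrt ((a j - a i) ^ 2) := (Real.sqrt_sq_eq_abs _).symm
    _ ≤ Real.sqrt (2 * ∑ k, a k ^ 2) := Real.sqrt_le_sqrt h1
    _ = Real.sqrt 2 * l2 a := by
        rw [Real.sqrt_mul (by norm_num : (0:ℝ) ≤ 2)]; rfl

/-- The key consequence of d-stationarity when `trimmed1 K xstar ≠ 0`. -/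
lemma key_lemma {n K : ℕ} (hK1 : 1 ≤ K) (hK : K < n)
    (γ : ℝ)
    (O : Set (Fin n → ℝ)) (hO : IsOpen O) (hCO : simplex n ⊆ O)
    (f : (Fin n → ℝ) → ℝ) (hf : ContDiffOn ℝ 1 f O)
    (F : (Fin n → ℝ) → ℝ) (hF : ∀ x, F x = f x + γ * trimmed1 K x)
    (xstar : Fin n → ℝ) (hx : xstar ∈ simplex n)
    (hstat : ∀ d ∈ feasCone (simplex n) xstar, ∀ Ld : ℝ,
      HasDDerivAt F xstar d Ld → 0 ≤ Ld)
    (hT : trimmed1 K xstar ≠ 0) :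
    ∃ i j : Fin n, i ≠ j ∧ 0 < xstar i ∧
      γ ≤ fderiv ℝ f xstar (dir i j) ∧
      Tendsto (fun ς : ℝ => (f (xstar + ς • dir i j) - f xstar) / ς)
        (nhdsWithin 0 (Set.Ioi 0)) (nhds (fderiv ℝ f xstar (dir i j))) := by
  obtain ⟨Λ, hcard, hTeq⟩ := trimmed1_exists (K := K) xstar
  have hT0 : 0 < trimmed1 K xstar := (trimmed1_nonneg xstar).lt_of_ne (Ne.symm hT)
  -- some i ∈ Λ with xstar i > 0
  have hex : ∃ i ∈ Λ, 0 < xstar i := by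
    by_contra h
    push_neg at h
    have hz : ∀ k ∈ Λ, |xstar k| = 0 := by
      intro k hk
      have := le_antisymm (h k hk) (hx.2 k)
      simp [this]
    rw [hTeq, Finset.sum_congr rfl hz] at hT0
    simp at hT0
  obtain ⟨i, hiΛ, hxi⟩ := hex
  -- some j ∉ Λ
  have hcc : (Λᶜ : Finset (Fin n)).card = K := by
    rw [Finset.card_compl, hcard, Fintype.card_fin, Nat.sub_sub_self hK.le]
  obtain ⟨j, hj⟩ := Finset.card_pos.mp (by rw [hcc]; omega)
  have hjΛ : j ∉ Λ := Finset.mem_compl.mp hj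
  have hij : i ≠ j := fun h => hjΛ (h ▸ hiΛ)
  have hdf : DifferentiableAt ℝ f xstar :=
    (hf.differentiableOn one_ne_zero).differentiableAt (hO.mem_nhds (hCO hx))
  have htf := f_dd (d := dir i j) hdf
  set L := fderiv ℝ f xstar (dir i j) with hL
  have hfeas : dir i j ∈ feasCone (simplex n) xstar :=
    ⟨hx, xstar i, hxi, fun ς h1 h2 => mem_simplex_dir hij hx h1 h2.le⟩
  have hFt : HasDDerivAt F xstar (dir i j) (L - γ) := by
    unfold HasDDerivAt
    have hev : (fun ς : ℝ => (f (xstar + ς • dir i j) - f xstar) / ς - γ)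
        =ᶠ[nhdsWithin 0 (Set.Ioi 0)]
        (fun ς : ℝ => (F (xstar + ς • dir i j) - F xstar) / ς) := by
      filter_upwards [Ioo_mem_nhdsGT_of_mem (Set.mem_Ico.mpr ⟨le_refl 0, hxi⟩)] with ς hς
      rw [hF, hF, trimmed1_shift hij hx hς.1 hς.2.le hcard hTeq hiΛ hjΛ]
      have hςne : ς ≠ 0 := ne_of_gt hς.1
      field_simp
      ring
    exact ((htf.sub_const γ).congr' hev)
  have := hstat _ hfeas _ hFt
  exact ⟨i, j, hij, hxi, by linarith, htf⟩

end Aux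

/-- Exact penalty for trimmed-lasso problems over the standard simplex
(e.g., sparse portfolio selection). -/
theorem stmt16 {n K : ℕ} (hK1 : 1 ≤ K) (hK : K < n)
    (γ : ℝ) (hγ : 0 < γ)
    (O : Set (Fin n → ℝ)) (hO : IsOpen O) (hCO : simplex n ⊆ O)
    (f : (Fin n → ℝ) → ℝ) (hf : ContDiffOn ℝ 1 f O)
    (F : (Fin n → ℝ) → ℝ) (hF : ∀ x, F x = f x + γ * trimmed1 K x)
    (xstar : Fin n → ℝ) (hx : xstar ∈ simplex n)
    -- x* is a d-stationary point of the problem over the simplex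
    (hstat : ∀ d ∈ feasCone (simplex n) xstar, ∀ Ld : ℝ,
      HasDDerivAt F xstar d Ld → 0 ≤ Ld)
    -- M′ is a Lipschitz constant of f on the simplex w.r.t. the ℓ₂ norm
    (M' : ℝ) (hM' : ∀ x ∈ simplex n, ∀ y ∈ simplex n, |f x - f y| ≤ M' * l2 (x - y)) :
    (γ > Real.sqrt 2 * M' → trimmed1 K xstar = 0 ∧ l0 xstar ≤ K) ∧
    (∀ M : ℝ, (0 : Fin n → ℝ) ∈ O →
      -- f is M-smooth
      (∀ x ∈ O, ∀ y ∈ O, l2 (gradf f x - gradf f y) ≤ M * l2 (x - y)) →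
      γ > min (Real.sqrt 2 * M') (Real.sqrt 2 * (l2 (gradf f 0) + M)) →
      trimmed1 K xstar = 0 ∧ l0 xstar ≤ K) := by
  -- conclusion from `trimmed1 = 0`
  have conc : trimmed1 K xstar = 0 → trimmed1 K xstar = 0 ∧ l0 xstar ≤ K := by
    intro h0
    refine ⟨h0, ?_⟩
    obtain ⟨Λ, hcard, hTeq⟩ := trimmed1_exists (K := K) xstar
    have hzero : ∀ k ∈ Λ, xstar k = 0 := by
      intro k hk
      have hsum : ∑ m ∈ Λ, |xstar m| = 0 := by rw [← hTeq, h0]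
      have := (Finset.sum_eq_zero_iff_of_nonneg (fun m _ => abs_nonneg (xstar m))).mp hsum k hk
      exact abs_eq_zero.mp this
    have hsub : (Finset.univ.filter fun k => xstar k ≠ 0) ⊆ Λᶜ := by
      intro k hk
      rw [Finset.mem_compl]
      intro hkΛ
      exact (Finset.mem_filter.mp hk).2 (hzero k hkΛ)
    calc l0 xstar ≤ (Λᶜ : Finset (Fin n)).card := Finset.card_le_card hsub
      _ = K := by rw [Finset.card_compl, hcard, Fintype.card_fin, Nat.sub_sub_self hK.le]
  -- Lipschitz-based conclusion
  have key1 : γ > Real.sqrt 2 * M' → trimmed1 K xstar = 0 := by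
    intro hγM
    by_contra hT
    obtain ⟨i, j, hij, hxi, hγL, htf⟩ :=
      key_lemma hK1 hK γ O hO hCO f hf F hF xstar hx hstat hT
    -- bound the limit by √2 * M'
    have hbound : fderiv ℝ f xstar (dir i j) ≤ Real.sqrt 2 * M' := by
      apply le_of_tendsto htf
      filter_upwards [Ioo_mem_nhdsGT_of_mem (Set.mem_Ico.mpr ⟨le_refl 0, hxi⟩)] with ς hς
      have hmem : xstar + ς • dir i j ∈ simplex n := mem_simplex_dir hij hx hς.1 hς.2.le
      have hlip := hM' _ hmem _ hx
      have hsub : (xstar + ς • dir i j) - xstar = ς • dir i j := by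
        abel
      rw [hsub, l2_smul_dir hij hς.1.le] at hlip
      rw [div_le_iff₀ hς.1]
      have h1 : f (xstar + ς • dir i j) - f xstar ≤ |f (xstar + ς • dir i j) - f xstar| :=
        le_abs_self _
      have h2 : M' * (ς * Real.sqrt 2) = Real.sqrt 2 * M' * ς := by ring
      linarith [hlip, h1, h2 ▸ hlip]
    linarith
  refine ⟨fun h => conc (key1 h), ?_⟩
  intro M h0O hsmooth hγmin
  rcases min_lt_iff.mp hγmin with h | h
  · exact conc (key1 h)
  · apply conc
    by_contra hT
    obtain ⟨i, j, hij, hxi, hγL, htf⟩ :=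
      key_lemma hK1 hK γ O hO hCO f hf F hF xstar hx hstat hT
    have h1 : fderiv ℝ f xstar (dir i j) ≤ Real.sqrt 2 * l2 (gradf f xstar) := bound_grad hij
    -- l2 (gradf f xstar) ≤ l2 (gradf f 0) + M
    have hsm := hsmooth xstar (hCO hx) 0 h0O
    have hx0 : xstar - 0 = xstar := by simp
    rw [hx0] at hsm
    have hl2x : l2 xstar ≤ 1 := l2_simplex_le_one hx
    have hl2xpos : 0 < l2 xstar := by
      have hs : xstar i ^ 2 ≤ ∑ k, xstar k ^ 2 :=
        Finset.single_le_sum (f := fun k => xstar k ^ 2) (fun m _ => sq_nonneg _)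
          (Finset.mem_univ i)
      have : 0 < ∑ k, xstar k ^ 2 := lt_of_lt_of_le (by positivity) hs
      exact Real.sqrt_pos.mpr this
    have hMnn : 0 ≤ M := by nlinarith [l2_nonneg (gradf f xstar - gradf f 0)]
    have h2 : l2 (gradf f xstar) ≤ l2 (gradf f 0) + M := by
      have := l2_triangle (gradf f xstar) (gradf f 0)
      nlinarith
    have h3 : Real.sqrt 2 * l2 (gradf f xstar) ≤ Real.sqrt 2 * (l2 (gradf f 0) + M) := by
      have := Real.sqrt_nonneg 2
      nlinarith
    linarith
end

section
/- Let m ≤ n, q = m, K ∈ {0, …, q−1}, γ > 0, C ⊆ ℝ^{m×n}, and let f : ℝ^{m×n} → ℝ be such that f restricted to C is directionally differentiable. Consider the problem: minimize f(X) + γ 𝒯_K(X) over X ∈ C, where 𝒯_K is the truncated nuclear norm. Let X* ∈ C be a d-stationary point, i.e., f′(X*; D) + γ 𝒯_K′(X*; D) ≥ 0 for all D ∈ F(X*; C). Assume: (C1) for every X ∈ C there exists a singular value decomposition X = U [diag(σ₁(X), …, σ_q(X)), 0] Vᵀ (U, V orthogonal) such that −U [diag(0, …, 0, σ_{K+1}(X),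 …, σ_q(X)), 0] Vᵀ ∈ F(X; C); (C2) there exists Γ such that f′(X*; D) ≤ Γ for every D ∈ F(X*; C) with ‖D‖_* = 1. If γ > Γ, then 𝒯_K(X*) = 0, i.e., rank(X*) ≤ K. -/
open Filter Topology Matrix Polynomial

/-- The singular values of `X` (in some order): square roots of the eigenvalues of `X Xᴴ`. -/
noncomputable def svals {m n : ℕ} (X : Matrix (Fin m) (Fin n) ℝ) : Fin m → ℝ :=
  fun i => Real.sqrt ((Matrix.isHermitian_mul_conjTranspose_self X).eigenvalues i)

/-- The truncated nuclear norm `𝒯_K(X)`: the sum of the `m − K` smallest singular values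
(equivalently, `Σ_{i=K+1}^q σ_i(X)` with the σᵢ in decreasing order). -/
noncomputable def truncNuc {m n : ℕ} (K : ℕ) (X : Matrix (Fin m) (Fin n) ℝ) : ℝ :=
  sInf {s : ℝ | ∃ Λ : Finset (Fin m), Λ.card = m - K ∧ s = ∑ i ∈ Λ, svals X i}

/-- The nuclear norm `‖X‖_*`: the sum of all singular values. -/
noncomputable def nucNorm {m n : ℕ} (X : Matrix (Fin m) (Fin n) ℝ) : ℝ :=
  ∑ i, svals X i

/-- The `m × n` rectangular diagonal matrix `[diag σ, 0]`. -/
def rectDiag {m n : ℕ} (σ : Fin m → ℝ) : Matrix (Fin m) (Fin n) ℝ :=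
  Matrix.of fun i j => if (i : ℕ) = (j : ℕ) then σ i else 0


/-- charpoly is invariant under orthogonal conjugation. -/
lemma charpoly_conj_orth {m : ℕ} (U M : Matrix (Fin m) (Fin m) ℝ) (hU : Uᵀ * U = 1) :
    (U * M * Uᵀ).charpoly = M.charpoly := by
  have hU' : U * Uᵀ = 1 := mul_eq_one_comm.mp hU
  let φ : Matrix (Fin m) (Fin m) ℝ →+* Matrix (Fin m) (Fin m) ℝ[X] := (C : ℝ →+* ℝ[X]).mapMatrix
  have h1 : φ U * φ Uᵀ = 1 := by rw [← _root_.map_mul, hU', _root_.map_one]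
  have h2 : φ Uᵀ * φ U = 1 := by rw [← _root_.map_mul, hU, _root_.map_one]
  have key : charmatrix (U * M * Uᵀ) = φ U * charmatrix M * φ Uᵀ := by
    unfold charmatrix
    rw [Matrix.mul_sub, Matrix.sub_mul, _root_.map_mul, _root_.map_mul]
    congr 1
    have := (Matrix.scalar_commute (n := Fin m) (X : ℝ[X]) (fun r' => Commute.all _ _) (φ Uᵀ)).eq
    rw [mul_assoc, this, ← mul_assoc, h1, one_mul]
  rw [Matrix.charpoly, key, Matrix.det_mul, Matrix.det_mul, mul_comm, ← mul_assoc,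
    ← Matrix.det_mul, h2, Matrix.det_one, one_mul, Matrix.charpoly]

lemma charpoly_diagonal' {m : ℕ} (w : Fin m → ℝ) :
    (Matrix.diagonal w).charpoly = ∏ i, (X - C (w i)) := by
  have : charmatrix (Matrix.diagonal w) = Matrix.diagonal fun i => X - C (w i) := by
    ext i j
    by_cases h : i = j
    · subst h; simp [charmatrix_apply_eq]
    · simp [charmatrix_apply_ne _ _ _ h, Matrix.diagonal_apply_ne _ h]
  rw [Matrix.charpoly, this, Matrix.det_diagonal]

/-- eigenvalues multiset of a hermitian matrix conjugate-diagonalized. -/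
lemma eigs_multiset {m : ℕ} (A : Matrix (Fin m) (Fin m) ℝ) (hA : A.IsHermitian)
    (U : Matrix (Fin m) (Fin m) ℝ) (w : Fin m → ℝ) (hU : Uᵀ * U = 1)
    (hAeq : A = U * Matrix.diagonal w * Uᵀ) :
    Multiset.map hA.eigenvalues Finset.univ.val = Multiset.map w Finset.univ.val := by
  have hstarW : ∀ (W : Matrix (Fin m) (Fin m) ℝ), star W = Wᵀ := fun W => by
    ext i j; simp [Matrix.star_apply]
  have hW : (hA.eigenvectorUnitary : Matrix (Fin m) (Fin m) ℝ)ᵀ *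
      (hA.eigenvectorUnitary : Matrix (Fin m) (Fin m) ℝ) = 1 := by
    rw [← hstarW]; exact Unitary.star_mul_self_of_mem hA.eigenvectorUnitary.2
  have hspec : A = (hA.eigenvectorUnitary : Matrix (Fin m) (Fin m) ℝ) *
      Matrix.diagonal hA.eigenvalues * (hA.eigenvectorUnitary : Matrix (Fin m) (Fin m) ℝ)ᵀ := by
    conv_lhs => rw [hA.spectral_theorem]
    rw [Unitary.conjStarAlgAut_apply, hstarW]
    congr 1
  have h1 : (∏ i, (X - C (hA.eigenvalues i))) = ∏ i, (X - C (w i)) := by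
    rw [← charpoly_diagonal', ← charpoly_diagonal', ← charpoly_conj_orth _ _ hW, ← hspec,
      hAeq, charpoly_conj_orth _ _ hU]
  have h2 : ∀ (v : Fin m → ℝ), (∏ i, (X - C (v i))) =
      (Multiset.map (fun a => X - C a) (Multiset.map v Finset.univ.val)).prod := by
    intro v
    rw [Multiset.map_map]
    rfl
  have := congrArg Polynomial.roots h1
  rwa [h2 hA.eigenvalues, h2 w, Polynomial.roots_multiset_prod_X_sub_C,
    Polynomial.roots_multiset_prod_X_sub_C] at this

lemma exists_comp_perm {m : ℕ} (a b : Fin m → ℝ)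
    (h : Multiset.map a Finset.univ.val = Multiset.map b Finset.univ.val) :
    ∃ e : Equiv.Perm (Fin m), ∀ i, a i = b (e i) := by
  have hperm : ∀ (f : Fin m → ℝ) (e : Equiv.Perm (Fin m)),
      Multiset.map (f ∘ e) Finset.univ.val = Multiset.map f Finset.univ.val := by
    intro f e
    have : Multiset.map (⇑e) Finset.univ.val = Finset.univ.val := by
      have := Finset.map_univ_equiv e
      calc Multiset.map (⇑e) Finset.univ.val
          = (Finset.univ.map e.toEmbedding).val := rfl
        _ = Finset.univ.val := by rw [this]
    conv_rhs => rw [← this, Multiset.map_map]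
  have hofn : ∀ (f : Fin m → ℝ), (↑(List.ofFn f) : Multiset ℝ) = Multiset.map f Finset.univ.val := by
    intro f
    rw [List.ofFn_eq_map]
    rfl
  set ea := Tuple.sort a
  set eb := Tuple.sort b
  have hma : Monotone (a ∘ ea) := Tuple.monotone_sort a
  have hmb : Monotone (b ∘ eb) := Tuple.monotone_sort b
  have hp : (List.ofFn (a ∘ ea)).Perm (List.ofFn (b ∘ eb)) := by
    rw [← Multiset.coe_eq_coe, hofn, hofn, hperm, hperm, h]
  have hsa : List.Pairwise (· ≤ ·) (List.ofFn (a ∘ ea)) := by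
    rw [← List.sortedLE_iff_pairwise, List.sortedLE_ofFn_iff]; exact hma
  have hsb : List.Pairwise (· ≤ ·) (List.ofFn (b ∘ eb)) := by
    rw [← List.sortedLE_iff_pairwise, List.sortedLE_ofFn_iff]; exact hmb
  have heq : List.ofFn (a ∘ ea) = List.ofFn (b ∘ eb) :=
    List.Perm.eq_of_pairwise' hsa hsb hp
  have hfun : a ∘ ea = b ∘ eb := by
    exact List.ofFn_injective heq
  exact ⟨ea.symm.trans eb, fun i => by
    have := congrFun hfun (ea.symm i)
    simpa using this⟩
lemma rectDiag_mul_transpose {m n : ℕ} (hmn : m ≤ n) (τ : Fin m → ℝ) :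
    rectDiag (n := n) τ * (rectDiag (n := n) τ)ᵀ = Matrix.diagonal (fun i => τ i ^ 2) := by
  ext i k
  simp only [Matrix.mul_apply, Matrix.transpose_apply, rectDiag, Matrix.of_apply]
  rw [Finset.sum_eq_single (⟨(i : ℕ), lt_of_lt_of_le i.2 hmn⟩ : Fin n)]
  · by_cases h : (i : ℕ) = (k : ℕ)
    · have : i = k := Fin.ext h
      subst this
      simp [Matrix.diagonal_apply_eq, pow_two]
    · have : i ≠ k := fun hc => h (by rw [hc])
      rw [Matrix.diagonal_apply_ne _ this, if_neg (fun hc : (k:ℕ) = (i:ℕ) => h hc.symm), mul_zero]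
  · intro j _ hj
    have : (i : ℕ) ≠ (j : ℕ) := fun hc => hj (Fin.ext hc.symm)
    simp [this]
  · intro h
    exact absurd (Finset.mem_univ _) h

lemma svals_spec {m n : ℕ} (hmn : m ≤ n) (U : Matrix (Fin m) (Fin m) ℝ)
    (V : Matrix (Fin n) (Fin n) ℝ) (τ : Fin m → ℝ) (hτ : ∀ i, 0 ≤ τ i)
    (hU : Uᵀ * U = 1) (hV : Vᵀ * V = 1) :
    ∃ e : Equiv.Perm (Fin m), ∀ i, svals (U * rectDiag (n := n) τ * Vᵀ) i = τ (e i) := by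
  set X := U * rectDiag (n := n) τ * Vᵀ with hX
  have hherm := Matrix.isHermitian_mul_conjTranspose_self X
  have hct : Xᴴ = Xᵀ := by
    ext i j; simp [Matrix.conjTranspose_apply]
  have hA : X * Xᴴ = U * Matrix.diagonal (fun i => τ i ^ 2) * Uᵀ := by
    rw [hct, hX, Matrix.transpose_mul, Matrix.transpose_mul, Matrix.transpose_transpose]
    calc U * rectDiag (n := n) τ * Vᵀ * (V * ((rectDiag (n := n) τ)ᵀ * Uᵀ))
        = U * (rectDiag (n := n) τ * (Vᵀ * V) * (rectDiag (n := n) τ)ᵀ) * Uᵀ := by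
          simp only [Matrix.mul_assoc]
      _ = U * Matrix.diagonal (fun i => τ i ^ 2) * Uᵀ := by
          rw [hV, Matrix.mul_one, rectDiag_mul_transpose hmn]
  have hmult := eigs_multiset (X * Xᴴ) hherm U (fun i => τ i ^ 2) hU hA
  obtain ⟨e, he⟩ := exists_comp_perm _ _ hmult
  refine ⟨e, fun i => ?_⟩
  show Real.sqrt (hherm.eigenvalues i) = τ (e i)
  rw [he i, Real.sqrt_sq (hτ _)]
lemma card_tailSet {m K : ℕ} (hK : K ≤ m) :
    (Finset.univ.filter (fun i : Fin m => K ≤ (i : ℕ))).card = m - K := by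
  have h1 : (Finset.univ.filter (fun i : Fin m => ¬ K ≤ (i : ℕ))).card = K := by
    have : (Finset.univ.filter (fun i : Fin m => ¬ K ≤ (i : ℕ)))
        = Finset.map (Fin.castLEEmb hK) Finset.univ := by
      ext i
      rw [Finset.mem_filter, Finset.mem_map]
      constructor
      · intro h
        exact ⟨⟨(i : ℕ), not_le.mp h.2⟩, Finset.mem_univ _, Fin.ext rfl⟩
      · rintro ⟨j, -, rfl⟩
        exact ⟨Finset.mem_univ _, not_le.mpr j.2⟩
    rw [this, Finset.card_map, Finset.card_univ, Fintype.card_fin]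
  have h2 := Finset.card_filter_add_card_filter_not
    (s := (Finset.univ : Finset (Fin m))) (p := fun i : Fin m => K ≤ (i : ℕ))
  rw [Finset.card_univ, Fintype.card_fin] at h2
  omega

lemma sum_le_sum_of_card_eq {m : ℕ} (τ : Fin m → ℝ) {A B : Finset (Fin m)}
    (h : A.card = B.card) (hle : ∀ b ∈ B, ∀ a ∈ A, τ b ≤ τ a) :
    ∑ i ∈ B, τ i ≤ ∑ i ∈ A, τ i := by
  have g : {x // x ∈ B} ≃ {x // x ∈ A} := Finset.equivOfCardEq h.symm
  rw [← Finset.sum_coe_sort B τ, ← Finset.sum_coe_sort A τ]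
  calc ∑ b : {x // x ∈ B}, τ b ≤ ∑ b : {x // x ∈ B}, τ (g b) :=
        Finset.sum_le_sum fun b _ => hle b b.2 (g b) (g b).2
    _ = ∑ a : {x // x ∈ A}, τ a := Equiv.sum_comp g (fun a => τ (a : Fin m))

/-- Value of the truncated nuclear norm when the singular values are `τ` up to a
permutation and the "tail" values are the smallest ones. -/
lemma truncNuc_val {m n K : ℕ} (hK : K < m) (X : Matrix (Fin m) (Fin n) ℝ)
    (τ : Fin m → ℝ) (e : Equiv.Perm (Fin m)) (hs : ∀ i, svals X i = τ (e i))
    (hord : ∀ i j : Fin m, (i : ℕ) < K → K ≤ (j : ℕ) → τ j ≤ τ i) :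
    truncNuc K X = ∑ i ∈ Finset.univ.filter (fun i : Fin m => K ≤ (i : ℕ)), τ i := by
  set T := Finset.univ.filter (fun i : Fin m => K ≤ (i : ℕ)) with hT
  set t := ∑ i ∈ T, τ i with htdef
  set S := {s : ℝ | ∃ Λ : Finset (Fin m), Λ.card = m - K ∧ s = ∑ i ∈ Λ, svals X i} with hS
  have hsum : ∀ Λ : Finset (Fin m), ∑ i ∈ Λ, svals X i = ∑ j ∈ Λ.map e.toEmbedding, τ j := by
    intro Λ
    rw [Finset.sum_map]
    exact Finset.sum_congr rfl fun i _ => hs i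
  have hmem : t ∈ S := by
    refine ⟨T.map e.symm.toEmbedding, by rw [Finset.card_map]; exact card_tailSet hK.le, ?_⟩
    rw [hsum, Finset.map_map]
    have : (T.map (e.symm.toEmbedding.trans e.toEmbedding)) = T := by
      ext i
      simp [Finset.mem_map]
    rw [this]
  have hlb : ∀ s ∈ S, t ≤ s := by
    rintro s ⟨Λ, hcard, rfl⟩
    rw [hsum]
    set Λ' := Λ.map e.toEmbedding with hΛ'
    have hcard' : Λ'.card = T.card := by
      rw [Finset.card_map, hcard, card_tailSet hK.le]
    -- split into common part and differences
    have hsplit : ∀ (s₁ s₂ : Finset (Fin m)), ∑ i ∈ s₁, τ i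
        = ∑ i ∈ s₁ ∩ s₂, τ i + ∑ i ∈ s₁ \ s₂, τ i := fun s₁ s₂ =>
      (Finset.sum_inter_add_sum_sdiff s₁ s₂ τ).symm
    rw [htdef, hsplit Λ' T, hsplit T Λ', Finset.inter_comm]
    refine add_le_add_right ?_ _
    have hcards : (Λ' \ T).card = (T \ Λ').card := by
      have h1 := Finset.card_sdiff_add_card_inter Λ' T
      have h2 := Finset.card_sdiff_add_card_inter T Λ'
      rw [Finset.inter_comm] at h2
      omega
    refine sum_le_sum_of_card_eq τ hcards ?_
    intro b hb a ha
    rw [Finset.mem_sdiff, hT, Finset.mem_filter] at hb ha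
    exact hord a b (not_le.mp (fun h => ha.2 ⟨Finset.mem_univ a, h⟩)) hb.1.2
  have hne : S.Nonempty := ⟨t, hmem⟩
  have hbdd : BddBelow S := ⟨t, fun s hs' => hlb s hs'⟩
  exact le_antisymm (csInf_le hbdd hmem) (le_csInf hne hlb)

lemma rectDiag_smul {m n : ℕ} (c : ℝ) (b : Fin m → ℝ) :
    rectDiag (n := n) (fun i => c * b i) = c • rectDiag (n := n) b := by
  ext i j
  simp only [rectDiag, Matrix.of_apply, Matrix.smul_apply, smul_eq_mul]
  split <;> simp

lemma rectDiag_sub_smul {m n : ℕ} (a b : Fin m → ℝ) (c : ℝ) :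
    rectDiag (n := n) (fun i => a i - c * b i)
      = rectDiag (n := n) a - c • rectDiag (n := n) b := by
  ext i j
  simp only [rectDiag, Matrix.of_apply, Matrix.sub_apply, Matrix.smul_apply, smul_eq_mul]
  split <;> simp

lemma conj_sub_smul {m n : ℕ} (U : Matrix (Fin m) (Fin m) ℝ) (V : Matrix (Fin n) (Fin n) ℝ)
    (a b : Fin m → ℝ) (c : ℝ) :
    U * rectDiag (n := n) a * Vᵀ - c • (U * rectDiag (n := n) b * Vᵀ)
      = U * rectDiag (n := n) (fun i => a i - c * b i) * Vᵀ := by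
  rw [rectDiag_sub_smul, Matrix.mul_sub, Matrix.sub_mul, Matrix.mul_smul, Matrix.smul_mul]

lemma smul_mem_feasCone {E : Type*} [AddCommMonoid E] [Module ℝ E] {C : Set E} {x d : E}
    {c : ℝ} (hc : 0 < c) (hd : d ∈ feasCone C x) : c • d ∈ feasCone C x := by
  obtain ⟨hx, ς', hς', h⟩ := hd
  refine ⟨hx, ς' / c, div_pos hς' hc, fun ς h1 h2 => ?_⟩
  have : ς • (c • d) = (ς * c) • d := smul_smul ς c d
  rw [this]
  exact h (ς * c) (mul_pos h1 hc) ((lt_div_iff₀ hc).mp h2)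

lemma nucNorm_val {m n : ℕ} (X : Matrix (Fin m) (Fin n) ℝ) (τ : Fin m → ℝ)
    (e : Equiv.Perm (Fin m)) (hs : ∀ i, svals X i = τ (e i)) :
    nucNorm X = ∑ i, τ i := by
  unfold nucNorm
  rw [Finset.sum_congr rfl fun i _ => hs i]
  exact Equiv.sum_comp e τ

/-- Exact penalty at d-stationary points of composite problems with the truncated
nuclear norm penalty. -/
theorem stmt18 {m n : ℕ} (hmn : m ≤ n) {K : ℕ} (hK : K < m)
    (γ : ℝ) (hγ : 0 < γ)
    (C : Set (Matrix (Fin m) (Fin n) ℝ))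
    (f : Matrix (Fin m) (Fin n) ℝ → ℝ)
    -- f restricted to C is directionally differentiable, with derivative df
    (df : Matrix (Fin m) (Fin n) ℝ → Matrix (Fin m) (Fin n) ℝ → ℝ)
    (hdf : ∀ X ∈ C, ∀ D ∈ feasCone C X, HasDDerivAt f X D (df X D))
    (Xstar : Matrix (Fin m) (Fin n) ℝ) (hXC : Xstar ∈ C)
    -- X* is a d-stationary point: f′(X*;D) + γ 𝒯_K′(X*;D) ≥ 0 for feasible D
    (hstat : ∀ D ∈ feasCone C Xstar, ∀ LT : ℝ,
      HasDDerivAt (truncNuc K) Xstar D LT → 0 ≤ df Xstar D + γ * LT)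
    -- (C1): a suitable SVD-based direction is feasible at every point of C
    (hC1 : ∀ X ∈ C, ∃ (U : Matrix (Fin m) (Fin m) ℝ) (V : Matrix (Fin n) (Fin n) ℝ)
      (σ : Fin m → ℝ),
      Uᵀ * U = 1 ∧ Vᵀ * V = 1 ∧ Antitone σ ∧ (∀ i, 0 ≤ σ i) ∧
      X = U * rectDiag σ * Vᵀ ∧
      -(U * rectDiag (fun i => if (i : ℕ) < K then 0 else σ i) * Vᵀ) ∈ feasCone C X)
    -- (C2): bound on f′(X*; ·) over feasible directions of unit nuclear norm
    (Γ : ℝ)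
    (hC2 : ∀ D ∈ feasCone C Xstar, nucNorm D = 1 → df Xstar D ≤ Γ)
    (hγΓ : γ > Γ) :
    truncNuc K Xstar = 0 ∧ Xstar.rank ≤ K := by
  classical
  obtain ⟨U, V, σ, hU, hV, hanti, hpos, hXeq, hDfeas⟩ := hC1 Xstar hXC
  set T := Finset.univ.filter (fun i : Fin m => K ≤ (i : ℕ)) with hTdef
  set t := ∑ i ∈ T, σ i with htdef
  set τ₀ : Fin m → ℝ := fun i => if (i : ℕ) < K then 0 else σ i with hτ₀def
  have hτ₀sum : ∑ i, τ₀ i = t := by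
    rw [htdef, Finset.sum_filter]
    refine Finset.sum_congr rfl fun i _ => ?_
    by_cases h : (i : ℕ) < K
    · simp [hτ₀def, h, Nat.not_le.mpr h]
    · simp [hτ₀def, h, Nat.not_lt.mp h]
  have ht0 : 0 ≤ t := Finset.sum_nonneg fun i _ => hpos i
  have hordσ : ∀ i j : Fin m, (i : ℕ) < K → K ≤ (j : ℕ) → σ j ≤ σ i := by
    intro i j hi hj
    exact hanti (Fin.le_def.mpr (le_of_lt (lt_of_lt_of_le hi hj)))
  obtain ⟨e, he⟩ := svals_spec hmn U V σ hpos hU hV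
  have htn : truncNuc K Xstar = t := by
    rw [hXeq]
    exact truncNuc_val hK _ σ e he hordσ
  have hτ₀pos : ∀ i, 0 ≤ τ₀ i := by
    intro i
    by_cases h : (i : ℕ) < K <;> simp [hτ₀def, h, hpos i]
  -- main claim: t = 0
  have htzero : t = 0 := by
    by_contra htne
    have htpos : 0 < t := lt_of_le_of_ne ht0 (Ne.symm htne)
    set D : Matrix (Fin m) (Fin n) ℝ := -(U * rectDiag τ₀ * Vᵀ) with hDdef
    have hDfeas' : D ∈ feasCone C Xstar := hXeq ▸ hDfeas
    set D' := t⁻¹ • D with hD'def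
    have hD'feas : D' ∈ feasCone C Xstar := smul_mem_feasCone (inv_pos.mpr htpos) hDfeas'
    -- the perturbed matrix
    have hpert : ∀ ς : ℝ, Xstar + ς • D'
        = U * rectDiag (n := n) (fun i => σ i - (ς * t⁻¹) * τ₀ i) * Vᵀ := by
      intro ς
      have h1 : ς • D' = -((ς * t⁻¹) • (U * rectDiag τ₀ * Vᵀ)) := by
        rw [hD'def, hDdef, smul_smul, smul_neg]
      rw [h1, hXeq, ← sub_eq_add_neg]
      exact conj_sub_smul U V σ τ₀ (ς * t⁻¹)
    -- truncated nuclear norm along the ray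
    have hval : ∀ ς : ℝ, 0 < ς → ς < t → truncNuc K (Xstar + ς • D') = t - ς := by
      intro ς hς1 hς2
      have hc1 : 0 < ς * t⁻¹ := mul_pos hς1 (inv_pos.mpr htpos)
      have hc2 : ς * t⁻¹ < 1 := by
        rw [← div_eq_mul_inv, div_lt_one htpos]; exact hς2
      set σς : Fin m → ℝ := fun i => σ i - (ς * t⁻¹) * τ₀ i with hσςdef
      have hσςpos : ∀ i, 0 ≤ σς i := by
        intro i
        by_cases h : (i : ℕ) < K
        · simp [hσςdef, hτ₀def, h, hpos i]
        · have : σς i = (1 - ς * t⁻¹) * σ i := by simp [hσςdef, hτ₀def, h]; ring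
          rw [this]
          exact mul_nonneg (by linarith) (hpos i)
      have hordς : ∀ i j : Fin m, (i : ℕ) < K → K ≤ (j : ℕ) → σς j ≤ σς i := by
        intro i j hi hj
        have h1 : σς i = σ i := by simp [hσςdef, hτ₀def, hi]
        have h2 : σς j = σ j - (ς * t⁻¹) * σ j := by
          simp [hσςdef, hτ₀def, Nat.not_lt.mpr hj]
        have h3 : 0 ≤ (ς * t⁻¹) * σ j := mul_nonneg hc1.le (hpos j)
        have h4 : σ j ≤ σ i := hordσ i j hi hj
        rw [h1, h2]; linarith
      obtain ⟨eς, heς⟩ := svals_spec hmn U V σς hσςpos hU hV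
      rw [hpert ς, truncNuc_val hK _ σς eς heς hordς]
      have : ∑ i ∈ T, σς i = ∑ i ∈ T, (σ i - (ς * t⁻¹) * σ i) := by
        refine Finset.sum_congr rfl fun i hi => ?_
        rw [hTdef, Finset.mem_filter] at hi
        simp [hσςdef, hτ₀def, Nat.not_lt.mpr hi.2]
      rw [this, Finset.sum_sub_distrib, ← Finset.mul_sum, ← htdef]
      field_simp
    -- directional derivative of truncNuc at Xstar along D' is -1
    have hdd : HasDDerivAt (truncNuc K) Xstar D' (-1) := by
      unfold HasDDerivAt
      have hev : (fun ς : ℝ => (truncNuc K (Xstar + ς • D') - truncNuc K Xstar) / ς)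
          =ᶠ[nhdsWithin 0 (Set.Ioi 0)] fun _ => (-1 : ℝ) := by
        filter_upwards [Ioo_mem_nhdsGT_of_mem (Set.mem_Ico.mpr ⟨le_refl (0 : ℝ), htpos⟩)]
          with ς hς
        rw [hval ς hς.1 hς.2, htn, sub_sub_cancel_left, neg_div, div_self (ne_of_gt hς.1)]
      exact Filter.Tendsto.congr' hev.symm tendsto_const_nhds
    -- nuclear norm of D' is 1
    have hVneg : (-V)ᵀ * (-V) = 1 := by
      rw [Matrix.transpose_neg, neg_mul_neg, hV]
    have hD'eq : D' = U * rectDiag (n := n) (fun i => t⁻¹ * τ₀ i) * (-V)ᵀ := by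
      rw [rectDiag_smul, hD'def, hDdef]
      simp only [Matrix.transpose_neg, Matrix.mul_neg, Matrix.mul_smul, Matrix.smul_mul,
        smul_neg]
      rfl
    have hτ₀pos' : ∀ i, 0 ≤ t⁻¹ * τ₀ i :=
      fun i => mul_nonneg (inv_pos.mpr htpos).le (hτ₀pos i)
    obtain ⟨e', he'⟩ := svals_spec hmn U (-V) (fun i => t⁻¹ * τ₀ i) hτ₀pos' hU hVneg
    have hnuc : nucNorm D' = 1 := by
      rw [hD'eq, nucNorm_val _ (fun i => t⁻¹ * τ₀ i) e' he', ← Finset.mul_sum, hτ₀sum]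
      field_simp
    -- contradiction
    have h1 := hstat D' hD'feas (-1) hdd
    have h2 := hC2 D' hD'feas hnuc
    have h3 : HasDDerivAt f Xstar D' (df Xstar D') := hdf Xstar hXC D' hD'feas
    linarith
  refine ⟨by rw [htn, htzero], ?_⟩
  -- rank bound
  have hσ0 : ∀ i : Fin m, K ≤ (i : ℕ) → σ i = 0 := by
    intro i hi
    have := (Finset.sum_eq_zero_iff_of_nonneg fun j _ => hpos j).mp (htdef ▸ htzero)
    exact this i (by rw [hTdef]; exact Finset.mem_filter.mpr ⟨Finset.mem_univ _, hi⟩)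
  rw [hXeq]
  have hstep1 : (U * rectDiag σ * Vᵀ).rank ≤ (rectDiag (n := n) σ).rank :=
    le_trans (Matrix.rank_mul_le_left _ _) (Matrix.rank_mul_le_right _ _)
  refine le_trans hstep1 ?_
  -- rectDiag σ = diagonal σ * P
  set P : Matrix (Fin m) (Fin n) ℝ :=
    Matrix.of fun i j => if (i : ℕ) = (j : ℕ) then 1 else 0 with hPdef
  have hfact : rectDiag (n := n) σ = Matrix.diagonal σ * P := by
    ext i j
    rw [Matrix.diagonal_mul]
    simp only [rectDiag, Matrix.of_apply, hPdef]
    split <;> simp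
  rw [hfact]
  refine le_trans (Matrix.rank_mul_le_left _ _) ?_
  rw [Matrix.rank_diagonal]
  have hinj : Function.Injective
      (fun p : {i : Fin m // σ i ≠ 0} => (⟨(p.1 : ℕ),
        Nat.lt_of_not_le (fun h => p.2 (hσ0 p.1 h))⟩ : Fin K)) := by
    intro p q hpq
    simp only [Fin.mk.injEq] at hpq
    exact Subtype.ext (Fin.ext hpq)
  calc Fintype.card {i : Fin m // σ i ≠ 0} ≤ Fintype.card (Fin K) :=
        Fintype.card_le_of_injective _ hinj
    _ = K := Fintype.card_fin K
end
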